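/- Let L > 0, let γ, T, N : ℝ → ℝ² be smooth L-periodic maps and κ : ℝ → ℝ a smooth L-periodic function with κ(σ) > 0 for all σ, satisfying γ'(σ) = T(σ), N'(σ) = −κ(σ)·T(σ), and T(σ) ∧ N(σ) = 1 for all σ. Then for every smooth L-periodic function φ : ℝ → ℝ, the signed area of the Minkowski normal graph γ̃ := γ + φ·N satisfies 𝒜(γ̃) = 𝒜(γ) + (1/2)∫₀ᴸ κ(σ)(φ(σ) − κ(σ)⁻¹)² dσ − (1/2)∫₀ᴸ κ(σ)⁻¹ dσ. -/

import Mathlib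

/-- The wedge product `(a,b) ∧ (c,d) = ad − bc` of two plane vectors. -/
def wedge (v w : ℝ × ℝ) : ℝ := v.1 * w.2 - v.2 * w.1

/-- The signed Euclidean area `𝒜(c) = (1/2)∫₀ᴸ c ∧ c' dσ` of an `L`-periodic plane curve. -/
noncomputable def signedArea (L : ℝ) (c : ℝ → ℝ × ℝ) : ℝ :=
  (1 / 2) * ∫ σ in (0:ℝ)..L, wedge (c σ) (deriv c σ)

theorem signedArea_minkowski_normal_graph (L : ℝ) (hL : 0 < L)
    (γ T N : ℝ → ℝ × ℝ) (κ : ℝ → ℝ)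
    (hγ : ContDiff ℝ (⊤ : ℕ∞) γ) (hT : ContDiff ℝ (⊤ : ℕ∞) T) (hN : ContDiff ℝ (⊤ : ℕ∞) N)
    (hκ : ContDiff ℝ (⊤ : ℕ∞) κ)
    (hγp : Function.Periodic γ L) (hTp : Function.Periodic T L)
    (hNp : Function.Periodic N L) (hκp : Function.Periodic κ L)
    (hκpos : ∀ σ, 0 < κ σ)
    (hγ' : ∀ σ, deriv γ σ = T σ)
    (hN' : ∀ σ, deriv N σ = -(κ σ) • T σ)
    (hTN : ∀ σ, wedge (T σ) (N σ) = 1)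
    (φ : ℝ → ℝ) (hφ : ContDiff ℝ (⊤ : ℕ∞) φ) (hφp : Function.Periodic φ L) :
    signedArea L (fun σ => γ σ + φ σ • N σ)
      = signedArea L γ
        + (1 / 2) * (∫ σ in (0:ℝ)..L, κ σ * (φ σ - (κ σ)⁻¹) ^ 2)
        - (1 / 2) * (∫ σ in (0:ℝ)..L, (κ σ)⁻¹) := by
  have hγd : Differentiable ℝ γ := hγ.differentiable (by simp)
  have hNd : Differentiable ℝ N := hN.differentiable (by simp)
  have hφd : Differentiable ℝ φ := hφ.differentiable (by simp)
  have hγAt : ∀ σ, HasDerivAt γ (T σ) σ := fun σ => hγ' σ ▸ (hγd σ).hasDerivAt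
  have hNAt : ∀ σ, HasDerivAt N (-(κ σ) • T σ) σ := fun σ => hN' σ ▸ (hNd σ).hasDerivAt
  have hφAt : ∀ σ, HasDerivAt φ (deriv φ σ) σ := fun σ => (hφd σ).hasDerivAt
  set c := fun σ : ℝ => γ σ + φ σ • N σ with hcdef
  have hcAt : ∀ σ, HasDerivAt c (T σ + (φ σ • (-(κ σ) • T σ) + deriv φ σ • N σ)) σ :=
    fun σ => (hγAt σ).add ((hφAt σ).smul (hNAt σ))
  have hcderiv : ∀ σ, deriv c σ = T σ + (φ σ • (-(κ σ) • T σ) + deriv φ σ • N σ) :=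
    fun σ => (hcAt σ).deriv
  -- boundary function and its derivative
  set F := fun σ : ℝ => φ σ * wedge (γ σ) (N σ) with hFdef
  set g := fun σ : ℝ => deriv φ σ * wedge (γ σ) (N σ)
      + φ σ * (1 - κ σ * wedge (γ σ) (T σ)) with hgdef
  have hwAt : ∀ σ, HasDerivAt (fun s => wedge (γ s) (N s))
      (1 - κ σ * wedge (γ σ) (T σ)) σ := by
    intro σ
    have hγ1 : HasDerivAt (fun s => (γ s).1) (T σ).1 σ := by
      simpa using ((hγAt σ).hasFDerivAt.fst).hasDerivAt
    have hγ2 : HasDerivAt (fun s => (γ s).2) (T σ).2 σ := by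
      simpa using ((hγAt σ).hasFDerivAt.snd).hasDerivAt
    have hN1 : HasDerivAt (fun s => (N s).1) (-(κ σ) * (T σ).1) σ := by
      simpa using ((hNAt σ).hasFDerivAt.fst).hasDerivAt
    have hN2 : HasDerivAt (fun s => (N s).2) (-(κ σ) * (T σ).2) σ := by
      simpa using ((hNAt σ).hasFDerivAt.snd).hasDerivAt
    have h := (hγ1.mul hN2).sub (hγ2.mul hN1)
    have hTNσ := hTN σ
    simp only [wedge] at hTNσ ⊢
    refine h.congr_deriv ?_
    linear_combination hTNσ
  have hFAt : ∀ σ, HasDerivAt F (g σ) σ := by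
    intro σ
    have := (hφAt σ).mul (hwAt σ)
    exact this
  -- continuity facts
  have hγc := hγ.continuous
  have hTc := hT.continuous
  have hNc := hN.continuous
  have hκc := hκ.continuous
  have hφc := hφ.continuous
  have hφ'c : Continuous (deriv φ) := hφ.continuous_deriv (by simp)
  have hκne : ∀ σ, κ σ ≠ 0 := fun σ => (hκpos σ).ne'
  have hwγN : Continuous fun σ => wedge (γ σ) (N σ) := by
    unfold wedge; fun_prop
  have hwγT : Continuous fun σ => wedge (γ σ) (T σ) := by
    unfold wedge; fun_prop
  have hgc : Continuous g := by
    rw [hgdef]; fun_prop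
  have hAc : Continuous fun σ => wedge (γ σ) (deriv γ σ) := by
    have : (fun σ => wedge (γ σ) (deriv γ σ)) = fun σ => wedge (γ σ) (T σ) := by
      funext σ; rw [hγ' σ]
    rw [this]; unfold wedge; fun_prop
  have hBc : Continuous fun σ => κ σ * φ σ ^ 2 - 2 * φ σ := by fun_prop
  -- pointwise decomposition of the integrand
  have key : ∀ σ, wedge (c σ) (deriv c σ)
      = wedge (γ σ) (deriv γ σ) + (κ σ * φ σ ^ 2 - 2 * φ σ) + g σ := by
    intro σ
    have hTNσ := hTN σ
    rw [hcderiv σ, hγ' σ]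
    simp only [hcdef, hgdef, wedge, Prod.fst_add, Prod.snd_add, Prod.smul_fst, Prod.smul_snd,
      smul_eq_mul] at hTNσ ⊢
    linear_combination (-(φ σ) * (1 - φ σ * κ σ)) * hTNσ
  -- integral of g vanishes by periodicity
  have hgint : ∫ σ in (0:ℝ)..L, g σ = 0 := by
    have h := intervalIntegral.integral_eq_sub_of_hasDerivAt
      (f := F) (f' := g) (a := (0:ℝ)) (b := L)
      (fun x _ => hFAt x) (hgc.intervalIntegrable 0 L)
    rw [h]
    have hFL : F L = F 0 := by
      simp only [hFdef]
      have h1 : φ L = φ 0 := by simpa using hφp 0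
      have h2 : γ L = γ 0 := by simpa using hγp 0
      have h3 : N L = N 0 := by simpa using hNp 0
      rw [h1, h2, h3]
    rw [hFL, sub_self]
  -- main integral computation
  have hmain : ∫ σ in (0:ℝ)..L, wedge (c σ) (deriv c σ)
      = (∫ σ in (0:ℝ)..L, wedge (γ σ) (deriv γ σ))
        + ∫ σ in (0:ℝ)..L, (κ σ * φ σ ^ 2 - 2 * φ σ) := by
    have h1 : ∫ σ in (0:ℝ)..L, wedge (c σ) (deriv c σ)
        = ∫ σ in (0:ℝ)..L,
            (wedge (γ σ) (deriv γ σ) + (κ σ * φ σ ^ 2 - 2 * φ σ) + g σ) := by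
      apply intervalIntegral.integral_congr
      intro σ _; exact key σ
    rw [h1, intervalIntegral.integral_add, intervalIntegral.integral_add, hgint, add_zero]
    · exact hAc.intervalIntegrable 0 L
    · exact hBc.intervalIntegrable 0 L
    · exact ((hAc.add hBc).intervalIntegrable 0 L)
    · exact hgc.intervalIntegrable 0 L
  -- relate the square integral
  have hsq : ∫ σ in (0:ℝ)..L, κ σ * (φ σ - (κ σ)⁻¹) ^ 2
      = (∫ σ in (0:ℝ)..L, (κ σ * φ σ ^ 2 - 2 * φ σ)) + ∫ σ in (0:ℝ)..L, (κ σ)⁻¹ := by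
    have h1 : ∫ σ in (0:ℝ)..L, κ σ * (φ σ - (κ σ)⁻¹) ^ 2
        = ∫ σ in (0:ℝ)..L, ((κ σ * φ σ ^ 2 - 2 * φ σ) + (κ σ)⁻¹) := by
      apply intervalIntegral.integral_congr
      intro σ _
      have := hκne σ
      field_simp
      ring
    rw [h1, intervalIntegral.integral_add]
    · exact hBc.intervalIntegrable 0 L
    · exact (hκc.inv₀ hκne).intervalIntegrable 0 L
  simp only [signedArea]
  rw [hmain, hsq]
  ring
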